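/- arXiv:2007.12456 — 4 statements merged into one kernel-verified Lean document; each statement's English description precedes it below -/
import Mathlib

section
/- Let E be a Dirichlet form on L²(X,m) with E(0) = 0, and let 𝔇 be the energy space of the symmetric closure sym E. Then 𝔇 is a Riesz subspace of L²(X,m): for all u, v ∈ 𝔇 one has u∧v ∈ 𝔇 and u∨v ∈ 𝔇. -/
open scoped ENNReal
open MeasureTheory

noncomputable section

variable {X : Type*} [TopologicalSpace X] [MeasurableSpace X] [BorelSpace X]
variable {m : Measure X} [SigmaFinite m]

/-- Convexity for an `ℝ≥0∞`-valued functional on `L²(X,m)`. -/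
def IsConvexFunctional (E : Lp ℝ 2 m → ℝ≥0∞) : Prop :=
  ∀ u v : Lp ℝ 2 m, ∀ a b : ℝ, 0 ≤ a → 0 ≤ b → a + b = 1 →
    E (a • u + b • v) ≤ ENNReal.ofReal a * E u + ENNReal.ofReal b * E v

/-- The real function `s ↦ ½((s+α)₊ − (s−α)₋)` appearing in the second defining
inequality of Dirichlet forms. -/
def medTrunc (α s : ℝ) : ℝ :=
  (max (s + α) 0 - max (-(s - α)) 0) / 2

/-- Cipriani–Grillo: a (nonlinear) Dirichlet form is a convex, lower semicontinuous
functional `E : L²(X,m) → [0,∞]` with dense effective domain satisfying the two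
structural inequalities. The second one is stated for any `w ∈ L²` which is an a.e.
representative of `½((u−v+α)₊ − (u−v−α)₋)`. -/
def IsDirichletForm (E : Lp ℝ 2 m → ℝ≥0∞) : Prop :=
  IsConvexFunctional E ∧ LowerSemicontinuous E ∧ Dense {u : Lp ℝ 2 m | E u < ⊤} ∧
  (∀ u v : Lp ℝ 2 m, E (u ⊓ v) + E (u ⊔ v) ≤ E u + E v) ∧
  (∀ u v w : Lp ℝ 2 m, ∀ α : ℝ, 0 < α →
    (∀ᵐ x ∂m, w x = medTrunc α (u x - v x)) →
    E (v + w) + E (u - w) ≤ E u + E v)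

/-- `E` is symmetric: `E 0 = 0` and `E (-u) = E u`. -/
def IsSymmetricFunctional (E : Lp ℝ 2 m → ℝ≥0∞) : Prop :=
  E 0 = 0 ∧ ∀ u : Lp ℝ 2 m, E (-u) = E u

/-- `E₁ u = ‖u‖₂² + E u`. -/
def EOne (E : Lp ℝ 2 m → ℝ≥0∞) (u : Lp ℝ 2 m) : ℝ≥0∞ :=
  ENNReal.ofReal (‖u‖ ^ 2) + E u

/-- The Luxemburg-type norm `‖u‖_𝔇 = inf {λ > 0 | E₁(u/λ) ≤ 1}`, with `inf ∅ = ∞`. -/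
def Dnorm (E : Lp ℝ 2 m → ℝ≥0∞) (u : Lp ℝ 2 m) : ℝ≥0∞ :=
  sInf (ENNReal.ofReal '' {l : ℝ | 0 < l ∧ EOne E (l⁻¹ • u) ≤ 1})

/-- The Dirichlet space `𝔇 = {u ∈ L² | ‖u‖_𝔇 < ∞}`. -/
def Dspace (E : Lp ℝ 2 m → ℝ≥0∞) : Set (Lp ℝ 2 m) :=
  {u : Lp ℝ 2 m | Dnorm E u < ⊤}

/-- The symmetric closure `sym E` of `E`: the supremum of all lower semicontinuous convex
functionals `F` with `F ≤ E₁(·)` and `F ≤ E₁(-·)`. -/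
def symE (E : Lp ℝ 2 m → ℝ≥0∞) (u : Lp ℝ 2 m) : ℝ≥0∞ :=
  sSup {t : ℝ≥0∞ | ∃ F : Lp ℝ 2 m → ℝ≥0∞, LowerSemicontinuous F ∧ IsConvexFunctional F ∧
    (∀ w : Lp ℝ 2 m, F w ≤ EOne E w) ∧ (∀ w : Lp ℝ 2 m, F w ≤ EOne E (-w)) ∧ t = F u}

/-- The energy space of `sym E`: all `u` with `sym E (λ u) < ∞` for some `λ > 0`. -/
def DspaceSym (E : Lp ℝ 2 m → ℝ≥0∞) : Set (Lp ℝ 2 m) :=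
  {u : Lp ℝ 2 m | ∃ l : ℝ, 0 < l ∧ symE E (l • u) < ⊤}

/-!
Since `sym E` is convex, even and vanishes at `0`, its energy space is a linear subspace, and
`u ⊔ v = u + (v - u) ⊔ 0`, `u ⊓ v = -((-u) ⊔ (-v))`; so it suffices that
`sym E (½ (x ⊔ 0)) ≤ sym E x`. Let `F` be one of the functionals in the supremum defining
`sym E`. Writing `x = p - r` we get `x ⊔ 0 = (p ⊔ r) - r`, so convexity of `F` and the lattice
inequality `E₁ (p ⊔ r) ≤ E₁ p + E₁ r` give `F (½ (x ⊔ 0)) ≤ E₁ p + E₁ (-(x - p))`: the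
lower semicontinuous function `x ↦ F (½ (x ⊔ 0))` lies below the infimal convolution of `E₁`
and `E₁ (-·)`. The lower semicontinuous envelope of that infimal convolution is again convex and
below `E₁` and `E₁ (-·)`, hence below `sym E`.
-/

theorem ENNReal.le_mul_iInf_add_mul_iInf {ι κ : Sort*} [Nonempty ι] [Nonempty κ]
    {f : ι → ℝ≥0∞} {g : κ → ℝ≥0∞} {a b x : ℝ≥0∞} (ha : a ≠ ⊤) (hb : b ≠ ⊤)
    (h : ∀ i j, x ≤ a * f i + b * g j) : x ≤ a * iInf f + b * iInf g := by
  rw [ENNReal.mul_iInf (by simp [ha]), ENNReal.mul_iInf (by simp [hb])]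
  exact ENNReal.le_iInf_add_iInf h

section LscHull

open Metric

variable {α : Type*} [PseudoMetricSpace α]

def lscHull (Φ : α → ℝ≥0∞) (y : α) : ℝ≥0∞ :=
  ⨆ (ε : ℝ) (_ : 0 < ε), ⨅ z : ball y ε, Φ z

theorem iInf_ball_le_lscHull (Φ : α → ℝ≥0∞) (y : α) {ε : ℝ} (hε : 0 < ε) :
    ⨅ z : ball y ε, Φ z ≤ lscHull Φ y :=
  le_iSup₂ (f := fun (ε : ℝ) (_ : 0 < ε) => ⨅ z : ball y ε, Φ z) ε hε

theorem lscHull_le (Φ : α → ℝ≥0∞) (y : α) : lscHull Φ y ≤ Φ y :=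
  iSup₂_le fun _ hε => iInf_le_of_le ⟨y, mem_ball_self hε⟩ le_rfl

theorem LowerSemicontinuous.le_lscHull {Φ Ψ : α → ℝ≥0∞} (hΨ : LowerSemicontinuous Ψ)
    (hle : Ψ ≤ Φ) (y : α) : Ψ y ≤ lscHull Φ y := by
  refine le_of_forall_lt_imp_le_of_dense fun c hc => ?_
  obtain ⟨ε, hε, hball⟩ := Metric.eventually_nhds_iff.mp (hΨ y c hc)
  calc c ≤ ⨅ z : ball y ε, Φ z := le_iInf fun z => (hball z.2).le.trans (hle z)
    _ ≤ lscHull Φ y := iInf_ball_le_lscHull Φ y hε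

theorem lowerSemicontinuous_lscHull (Φ : α → ℝ≥0∞) : LowerSemicontinuous (lscHull Φ) := by
  intro y c hc
  obtain ⟨ε, hε, hc⟩ : ∃ ε, 0 < ε ∧ c < ⨅ z : ball y ε, Φ z := by
    simpa only [lscHull, lt_iSup_iff, exists_prop] using hc
  filter_upwards [ball_mem_nhds y (half_pos hε)] with z hz
  calc c < ⨅ w : ball y ε, Φ w := hc
    _ ≤ ⨅ w : ball z (ε / 2), Φ w :=
        le_iInf fun w => iInf_le_of_le ⟨w, ball_subset_ball' (by
          linarith [mem_ball.mp hz, dist_comm z y]) w.2⟩ le_rfl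
    _ ≤ lscHull Φ z := iInf_ball_le_lscHull Φ z (half_pos hε)

end LscHull

section
omit [TopologicalSpace X] [BorelSpace X] [SigmaFinite m]

variable {E f g : Lp ℝ 2 m → ℝ≥0∞}

theorem IsConvexFunctional.smul_le (hf : IsConvexFunctional f) (hf0 : f 0 = 0) {t : ℝ}
    (ht0 : 0 ≤ t) (ht1 : t ≤ 1) (u : Lp ℝ 2 m) : f (t • u) ≤ ENNReal.ofReal t * f u := by
  simpa [hf0] using hf u 0 t (1 - t) ht0 (by linarith) (by ring)

theorem IsConvexFunctional.smul_lt_top (hf : IsConvexFunctional f) (hf0 : f 0 = 0)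
    {u : Lp ℝ 2 m} {l t : ℝ} (hl : 0 < l) (hlu : f (l • u) < ⊤) (ht0 : 0 ≤ t) (htl : t ≤ l) :
    f (t • u) < ⊤ := by
  have htu : t • u = (t / l) • (l • u) := by rw [smul_smul, div_mul_cancel₀ t hl.ne']
  rw [htu]
  calc f ((t / l) • (l • u)) ≤ ENNReal.ofReal (t / l) * f (l • u) :=
        hf.smul_le hf0 (by positivity) ((div_le_one hl).mpr htl) _
    _ < ⊤ := ENNReal.mul_lt_top ENNReal.ofReal_lt_top hlu

theorem IsConvexFunctional.comp_neg (hf : IsConvexFunctional f) :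
    IsConvexFunctional (fun u => f (-u)) := by
  intro u v a b ha hb hab
  simpa only [neg_add, smul_neg] using hf (-u) (-v) a b ha hb hab

theorem IsConvexFunctional.lscHull (hf : IsConvexFunctional f) :
    IsConvexFunctional (lscHull f) := by
  intro y₁ y₂ a b ha hb hab
  refine iSup₂_le fun ε hε => ?_
  have : Nonempty (Metric.ball y₁ ε) := ⟨⟨y₁, Metric.mem_ball_self hε⟩⟩
  have : Nonempty (Metric.ball y₂ ε) := ⟨⟨y₂, Metric.mem_ball_self hε⟩⟩
  refine le_trans ?_ (add_le_add (mul_le_mul_right (iInf_ball_le_lscHull f y₁ hε) _)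
    (mul_le_mul_right (iInf_ball_le_lscHull f y₂ hε) _))
  refine ENNReal.le_mul_iInf_add_mul_iInf ENNReal.ofReal_ne_top ENNReal.ofReal_ne_top
    fun z₁ z₂ => iInf_le_of_le ⟨a • z₁ + b • z₂, ?_⟩ (hf z₁ z₂ a b ha hb hab)
  rw [Metric.mem_ball]
  calc dist (a • (z₁ : Lp ℝ 2 m) + b • (z₂ : Lp ℝ 2 m)) (a • y₁ + b • y₂)
      ≤ dist (a • (z₁ : Lp ℝ 2 m)) (a • y₁) + dist (b • (z₂ : Lp ℝ 2 m)) (b • y₂) :=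
        dist_add_add_le _ _ _ _
    _ = a * dist (z₁ : Lp ℝ 2 m) y₁ + b * dist (z₂ : Lp ℝ 2 m) y₂ := by
        rw [dist_smul₀, dist_smul₀, Real.norm_of_nonneg ha, Real.norm_of_nonneg hb]
    _ < ε := convex_Iio ε z₁.2 z₂.2 ha hb hab

def infConv (f g : Lp ℝ 2 m → ℝ≥0∞) (y : Lp ℝ 2 m) : ℝ≥0∞ :=
  ⨅ p, f p + g (y - p)

theorem infConv_le_left (hg0 : g 0 = 0) (y : Lp ℝ 2 m) : infConv f g y ≤ f y :=
  iInf_le_of_le y (by simp [hg0])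

theorem infConv_le_right (hf0 : f 0 = 0) (y : Lp ℝ 2 m) : infConv f g y ≤ g y :=
  iInf_le_of_le 0 (by simp [hf0])

theorem IsConvexFunctional.infConv (hf : IsConvexFunctional f) (hg : IsConvexFunctional g) :
    IsConvexFunctional (infConv f g) := by
  intro y₁ y₂ a b ha hb hab
  refine ENNReal.le_mul_iInf_add_mul_iInf ENNReal.ofReal_ne_top ENNReal.ofReal_ne_top
    fun p₁ p₂ => iInf_le_of_le (a • p₁ + b • p₂) ?_
  have hsub : a • y₁ + b • y₂ - (a • p₁ + b • p₂) = a • (y₁ - p₁) + b • (y₂ - p₂) := by module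
  calc f (a • p₁ + b • p₂) + g (a • y₁ + b • y₂ - (a • p₁ + b • p₂))
      ≤ (ENNReal.ofReal a * f p₁ + ENNReal.ofReal b * f p₂)
        + (ENNReal.ofReal a * g (y₁ - p₁) + ENNReal.ofReal b * g (y₂ - p₂)) := by
        rw [hsub]
        exact add_le_add (hf p₁ p₂ a b ha hb hab) (hg _ _ a b ha hb hab)
    _ = ENNReal.ofReal a * (f p₁ + g (y₁ - p₁)) + ENNReal.ofReal b * (f p₂ + g (y₂ - p₂)) := by
        ring

theorem eOne_zero (hzero : E 0 = 0) : EOne E 0 = 0 := by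
  simp [EOne, hzero]

theorem isConvexFunctional_eOne (hconv : IsConvexFunctional E) :
    IsConvexFunctional (EOne E) := by
  intro u v a b ha hb hab
  have hsq : ‖a • u + b • v‖ ^ 2 ≤ a * ‖u‖ ^ 2 + b * ‖v‖ ^ 2 := by
    simpa using ((convexOn_norm convex_univ).pow (fun _ _ => norm_nonneg _) 2).2
      (Set.mem_univ u) (Set.mem_univ v) ha hb hab
  calc EOne E (a • u + b • v)
      ≤ ENNReal.ofReal (a * ‖u‖ ^ 2 + b * ‖v‖ ^ 2)
        + (ENNReal.ofReal a * E u + ENNReal.ofReal b * E v) :=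
        add_le_add (ENNReal.ofReal_le_ofReal hsq) (hconv u v a b ha hb hab)
    _ = ENNReal.ofReal a * EOne E u + ENNReal.ofReal b * EOne E v := by
        rw [ENNReal.ofReal_add (by positivity) (by positivity), ENNReal.ofReal_mul ha,
          ENNReal.ofReal_mul hb]
        simp only [EOne]
        ring

theorem MeasureTheory.Lp.norm_sup_sq_add_norm_inf_sq (u v : Lp ℝ 2 m) :
    ‖u ⊔ v‖ ^ 2 + ‖u ⊓ v‖ ^ 2 = ‖u‖ ^ 2 + ‖v‖ ^ 2 := by
  have h₁ := parallelogram_law_with_norm ℝ (u ⊔ v) (u ⊓ v)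
  have h₂ := parallelogram_law_with_norm ℝ u v
  rw [add_comm (u ⊔ v), inf_add_sup, sup_sub_inf_eq_abs_sub, norm_abs_eq_norm, norm_sub_rev]
    at h₁
  linarith

theorem MeasureTheory.Lp.smul_sup_of_nonneg {l : ℝ} (hl : 0 ≤ l) (u v : Lp ℝ 2 m) :
    l • (u ⊔ v) = l • u ⊔ l • v := by
  apply Lp.ext
  filter_upwards [Lp.coeFn_smul l (u ⊔ v), Lp.coeFn_sup u v, Lp.coeFn_sup (l • u) (l • v),
    Lp.coeFn_smul l u, Lp.coeFn_smul l v] with x h₁ h₂ h₃ h₄ h₅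
  simp only [h₁, h₃, Pi.smul_apply, Pi.sup_apply, h₂, h₄, h₅]
  exact smul_max_of_nonneg hl _ _

theorem eOne_sup_le (hlat : ∀ u v : Lp ℝ 2 m, E (u ⊓ v) + E (u ⊔ v) ≤ E u + E v)
    (u v : Lp ℝ 2 m) : EOne E (u ⊔ v) ≤ EOne E u + EOne E v := by
  have hnorm : ‖u ⊔ v‖ ^ 2 ≤ ‖u‖ ^ 2 + ‖v‖ ^ 2 := by
    linarith [Lp.norm_sup_sq_add_norm_inf_sq u v, sq_nonneg ‖u ⊓ v‖]
  calc EOne E (u ⊔ v) ≤ ENNReal.ofReal (‖u‖ ^ 2 + ‖v‖ ^ 2) + (E u + E v) :=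
        add_le_add (ENNReal.ofReal_le_ofReal hnorm) (le_add_self.trans (hlat u v))
    _ = EOne E u + EOne E v := by
        rw [ENNReal.ofReal_add (by positivity) (by positivity)]
        simp only [EOne]
        ring

def IsSymMinorant (E F : Lp ℝ 2 m → ℝ≥0∞) : Prop :=
  LowerSemicontinuous F ∧ IsConvexFunctional F ∧
    (∀ w, F w ≤ EOne E w) ∧ (∀ w, F w ≤ EOne E (-w))

theorem IsSymMinorant.le_symE {F : Lp ℝ 2 m → ℝ≥0∞} (hF : IsSymMinorant E F)
    (u : Lp ℝ 2 m) : F u ≤ symE E u :=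
  le_sSup ⟨F, hF.1, hF.2.1, hF.2.2.1, hF.2.2.2, rfl⟩

theorem symE_le_of_forall {u : Lp ℝ 2 m} {c : ℝ≥0∞}
    (h : ∀ F, IsSymMinorant E F → F u ≤ c) : symE E u ≤ c :=
  sSup_le fun _ ⟨F, h₁, h₂, h₃, h₄, ht⟩ => ht ▸ h F ⟨h₁, h₂, h₃, h₄⟩

theorem IsSymMinorant.comp_neg {F : Lp ℝ 2 m → ℝ≥0∞} (hF : IsSymMinorant E F) :
    IsSymMinorant E (fun w => F (-w)) :=
  ⟨hF.1.comp continuous_neg, hF.2.1.comp_neg, fun w => by simpa using hF.2.2.2 (-w),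
    fun w => hF.2.2.1 (-w)⟩

theorem isConvexFunctional_symE : IsConvexFunctional (symE E) :=
  fun u v a b ha hb hab => symE_le_of_forall fun _ hF =>
    (hF.2.1 u v a b ha hb hab).trans
      (add_le_add (mul_le_mul_right (hF.le_symE u) _) (mul_le_mul_right (hF.le_symE v) _))

theorem isSymmetricFunctional_symE (hzero : E 0 = 0) : IsSymmetricFunctional (symE E) := by
  have hneg_le (u : Lp ℝ 2 m) : symE E (-u) ≤ symE E u :=
    symE_le_of_forall fun _ hF => hF.comp_neg.le_symE u
  refine ⟨le_antisymm (symE_le_of_forall fun _ hF => ?_) zero_le, fun u => ?_⟩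
  · simpa [eOne_zero hzero] using hF.2.2.1 0
  · exact le_antisymm (hneg_le u) (by simpa using hneg_le (-u))

theorem isSymMinorant_lscHull_infConv (hconv : IsConvexFunctional E) (hzero : E 0 = 0) :
    IsSymMinorant E (lscHull (infConv (EOne E) fun w => EOne E (-w))) := by
  have hconv₁ := isConvexFunctional_eOne hconv
  have hzero₁ := eOne_zero hzero
  refine ⟨lowerSemicontinuous_lscHull _, (hconv₁.infConv hconv₁.comp_neg).lscHull,
    fun w => (lscHull_le _ w).trans (infConv_le_left (by simpa using hzero₁) w),
    fun w => (lscHull_le _ w).trans (infConv_le_right hzero₁ w)⟩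

theorem IsSymMinorant.half_sup_zero_le_infConv {F : Lp ℝ 2 m → ℝ≥0∞} (hF : IsSymMinorant E F)
    (hlat : ∀ u v : Lp ℝ 2 m, E (u ⊓ v) + E (u ⊔ v) ≤ E u + E v) (y : Lp ℝ 2 m) :
    F ((2⁻¹ : ℝ) • (y ⊔ 0)) ≤ infConv (EOne E) (fun w => EOne E (-w)) y := by
  refine le_iInf fun p => ?_
  set r := p - y
  have hy : y ⊔ 0 = p ⊔ r - r := by rw [sup_sub, sub_self, sub_sub_cancel]
  have hhalf : ENNReal.ofReal 2⁻¹ + ENNReal.ofReal 2⁻¹ = 1 := by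
    rw [← ENNReal.ofReal_add (by norm_num) (by norm_num)]; norm_num
  calc F ((2⁻¹ : ℝ) • (y ⊔ 0)) = F ((2⁻¹ : ℝ) • (p ⊔ r) + (2⁻¹ : ℝ) • (-r)) := by
        rw [hy]; congr 1; module
    _ ≤ ENNReal.ofReal 2⁻¹ * F (p ⊔ r) + ENNReal.ofReal 2⁻¹ * F (-r) :=
        hF.2.1 _ _ _ _ (by norm_num) (by norm_num) (by norm_num)
    _ ≤ ENNReal.ofReal 2⁻¹ * (EOne E p + EOne E r) + ENNReal.ofReal 2⁻¹ * EOne E r := by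
        gcongr
        · exact (hF.2.2.1 _).trans (eOne_sup_le hlat p r)
        · simpa using hF.2.2.2 (-r)
    _ ≤ EOne E p + EOne E r := by
        rw [mul_add, add_assoc, ← add_mul, hhalf, one_mul]
        gcongr
        exact mul_le_of_le_one_left' (ENNReal.ofReal_le_one.mpr (by norm_num))
    _ = EOne E p + EOne E (-(y - p)) := by rw [neg_sub]

theorem symE_half_sup_zero_le (hconv : IsConvexFunctional E)
    (hlat : ∀ u v : Lp ℝ 2 m, E (u ⊓ v) + E (u ⊔ v) ≤ E u + E v) (hzero : E 0 = 0)
    (u : Lp ℝ 2 m) : symE E ((2⁻¹ : ℝ) • (u ⊔ 0)) ≤ symE E u := by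
  refine symE_le_of_forall fun F hF => ?_
  have hcont : Continuous fun y : Lp ℝ 2 m => (2⁻¹ : ℝ) • (y ⊔ 0) := by fun_prop
  have hlsc : LowerSemicontinuous fun y : Lp ℝ 2 m => F ((2⁻¹ : ℝ) • (y ⊔ 0)) := hF.1.comp hcont
  exact (hlsc.le_lscHull (hF.half_sup_zero_le_infConv hlat) u).trans
    ((isSymMinorant_lscHull_infConv hconv hzero).le_symE u)

theorem DspaceSym.add_mem (hzero : E 0 = 0) {u v : Lp ℝ 2 m} (hu : u ∈ DspaceSym E)
    (hv : v ∈ DspaceSym E) : u + v ∈ DspaceSym E := by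
  obtain ⟨l₁, hl₁, hu⟩ := hu
  obtain ⟨l₂, hl₂, hv⟩ := hv
  have hconv : IsConvexFunctional (symE E) := isConvexFunctional_symE
  have hzero' : symE E 0 = 0 := (isSymmetricFunctional_symE hzero).1
  set l := min l₁ l₂
  have hl : 0 < l := lt_min hl₁ hl₂
  have hlu := hconv.smul_lt_top hzero' hl₁ hu hl.le (min_le_left _ _)
  have hlv := hconv.smul_lt_top hzero' hl₂ hv hl.le (min_le_right _ _)
  refine ⟨l / 2, half_pos hl, ?_⟩
  have hsplit : (l / 2) • (u + v) = (2⁻¹ : ℝ) • (l • u) + (2⁻¹ : ℝ) • (l • v) := by module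
  rw [hsplit]
  refine (hconv _ _ _ _ (by norm_num) (by norm_num) (by norm_num)).trans_lt ?_
  exact ENNReal.add_lt_top.mpr ⟨ENNReal.mul_lt_top ENNReal.ofReal_lt_top hlu,
    ENNReal.mul_lt_top ENNReal.ofReal_lt_top hlv⟩

theorem DspaceSym.neg_mem (hzero : E 0 = 0) {u : Lp ℝ 2 m} (hu : u ∈ DspaceSym E) :
    -u ∈ DspaceSym E := by
  obtain ⟨l, hl, hu⟩ := hu
  exact ⟨l, hl, by rwa [smul_neg, (isSymmetricFunctional_symE hzero).2]⟩

theorem DspaceSym.sup_zero_mem (hconv : IsConvexFunctional E)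
    (hlat : ∀ u v : Lp ℝ 2 m, E (u ⊓ v) + E (u ⊔ v) ≤ E u + E v) (hzero : E 0 = 0)
    {u : Lp ℝ 2 m} (hu : u ∈ DspaceSym E) : u ⊔ 0 ∈ DspaceSym E := by
  obtain ⟨l, hl, hu⟩ := hu
  refine ⟨l / 2, half_pos hl, ?_⟩
  have hscale : (2⁻¹ : ℝ) • (l • u ⊔ 0) = (l / 2) • (u ⊔ 0) := by
    rw [div_eq_inv_mul, ← smul_smul, Lp.smul_sup_of_nonneg hl.le, smul_zero]
  rw [← hscale]
  exact (symE_half_sup_zero_le hconv hlat hzero _).trans_lt hu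

end

theorem Dspace_lattice_general
    (E : Lp ℝ 2 m → ℝ≥0∞) (hE : IsDirichletForm E) (hzero : E 0 = 0) :
    ∀ u ∈ DspaceSym E, ∀ v ∈ DspaceSym E,
      u ⊓ v ∈ DspaceSym E ∧ u ⊔ v ∈ DspaceSym E := by
  obtain ⟨hconv, -, -, hlat, -⟩ := hE
  have hsup : ∀ u ∈ DspaceSym E, ∀ v ∈ DspaceSym E, u ⊔ v ∈ DspaceSym E := by
    intro u hu v hv
    have hsplit : u ⊔ v = u + (v - u) ⊔ 0 := by rw [add_sup, add_zero, add_sub_cancel, sup_comm]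
    rw [hsplit, sub_eq_add_neg]
    exact DspaceSym.add_mem hzero hu (DspaceSym.sup_zero_mem hconv hlat hzero
      (DspaceSym.add_mem hzero hv (DspaceSym.neg_mem hzero hu)))
  intro u hu v hv
  refine ⟨?_, hsup u hu v hv⟩
  rw [← neg_neg (u ⊓ v), neg_inf]
  exact DspaceSym.neg_mem hzero
    (hsup _ (DspaceSym.neg_mem hzero hu) _ (DspaceSym.neg_mem hzero hv))

/-- The energy space `𝔇` of a Dirichlet form with `E 0 = 0` is a Riesz subspace of `L²`:
it is stable under the lattice operations. -/
theorem Dspace_lattice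
    (hsupp : ∀ U : Set X, IsOpen U → U.Nonempty → 0 < m U)
    (E : Lp ℝ 2 m → ℝ≥0∞) (hE : IsDirichletForm E) (hzero : E 0 = 0) :
    ∀ u ∈ DspaceSym E, ∀ v ∈ DspaceSym E,
      u ⊓ v ∈ DspaceSym E ∧ u ⊔ v ∈ DspaceSym E :=
  Dspace_lattice_general E hE hzero

end
end

section
/- Let E be a symmetric Dirichlet form on L²(X,m) with energy space 𝔇. Then for all u, v ∈ 𝔇 one has ‖u∧v‖_𝔇 ≤ ‖u‖_𝔇 + ‖v‖_𝔇. -/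
open scoped ENNReal
open MeasureTheory

noncomputable section

variable {X : Type*} [TopologicalSpace X] [MeasurableSpace X] [BorelSpace X]
variable {m : Measure X} [SigmaFinite m]

/-! `‖·‖_𝔇` is the gauge of the sublevel set `{E₁ ≤ 1}`. If `E₁(u/a) ≤ 1` and `E₁(v/b) ≤ 1`, write
`(u ∧ v)/(a + b) = (a/(a+b)) (u/a) ∧ (b/(a+b)) (v/b)`. The lattice inequality together with
`(f ∧ g)² ≤ f² + g²` gives `E₁(f ∧ g) ≤ E₁ f + E₁ g`, and convexity with `E 0 = 0` gives
`E₁(t f) ≤ t E₁ f` for `t ∈ [0, 1]`; hence `E₁((u ∧ v)/(a + b)) ≤ 1`, i.e. `‖u ∧ v‖_𝔇 ≤ a + b`. -/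

section LuxemburgNorm

variable {α : Type*} [MeasurableSpace α] {μ : Measure α}

lemma Lp.norm_sq_eq_integral_sq (f : Lp ℝ 2 μ) : ‖f‖ ^ 2 = ∫ x, f x * f x ∂μ := by
  rw [← real_inner_self_eq_norm_sq, L2.inner_def]
  rfl

lemma Lp.norm_inf_sq_le (f g : Lp ℝ 2 μ) : ‖f ⊓ g‖ ^ 2 ≤ ‖f‖ ^ 2 + ‖g‖ ^ 2 := by
  have hint (h : Lp ℝ 2 μ) : Integrable (fun x => h x * h x) μ :=
    L2.integrable_inner (𝕜 := ℝ) h h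
  simp only [Lp.norm_sq_eq_integral_sq]
  rw [← integral_add (hint f) (hint g)]
  refine integral_mono_ae (hint _) ((hint f).add (hint g)) ?_
  filter_upwards [Lp.coeFn_inf f g] with x hx
  rw [hx, Pi.inf_apply]
  rcases le_total (f x) (g x) with h | h
  · rw [inf_of_le_left h]
    exact le_add_of_nonneg_right (mul_self_nonneg _)
  · rw [inf_of_le_right h]
    exact le_add_of_nonneg_left (mul_self_nonneg _)

lemma Lp.smul_inf_of_nonneg {c : ℝ} (hc : 0 ≤ c) (f g : Lp ℝ 2 μ) :
    c • (f ⊓ g) = c • f ⊓ c • g := by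
  apply Lp.ext
  filter_upwards [Lp.coeFn_inf f g, Lp.coeFn_smul c (f ⊓ g), Lp.coeFn_inf (c • f) (c • g),
    Lp.coeFn_smul c f, Lp.coeFn_smul c g] with x h1 h2 h3 h4 h5
  simp only [h1, h2, h3, h4, h5, Pi.smul_apply, Pi.inf_apply, smul_eq_mul]
  exact mul_min_of_nonneg _ _ hc

variable {E : Lp ℝ 2 μ → ℝ≥0∞}

lemma EOne_inf_le (hinf : ∀ u v : Lp ℝ 2 μ, E (u ⊓ v) + E (u ⊔ v) ≤ E u + E v)
    (f g : Lp ℝ 2 μ) : EOne E (f ⊓ g) ≤ EOne E f + EOne E g := by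
  have hE : E (f ⊓ g) ≤ E f + E g := le_self_add.trans (hinf f g)
  have hnorm :
      ENNReal.ofReal (‖f ⊓ g‖ ^ 2) ≤ ENNReal.ofReal (‖f‖ ^ 2) + ENNReal.ofReal (‖g‖ ^ 2) := by
    rw [← ENNReal.ofReal_add (by positivity) (by positivity)]
    exact ENNReal.ofReal_le_ofReal (Lp.norm_inf_sq_le f g)
  calc EOne E (f ⊓ g) ≤ (ENNReal.ofReal (‖f‖ ^ 2) + ENNReal.ofReal (‖g‖ ^ 2)) + (E f + E g) :=
        add_le_add hnorm hE
    _ = EOne E f + EOne E g := by simp only [EOne]; ring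

lemma EOne_smul_le (hconv : IsConvexFunctional E) (h0 : E 0 = 0) (u : Lp ℝ 2 μ) {t : ℝ}
    (ht0 : 0 ≤ t) (ht1 : t ≤ 1) : EOne E (t • u) ≤ ENNReal.ofReal t * EOne E u := by
  have hE : E (t • u) ≤ ENNReal.ofReal t * E u := by
    simpa [h0] using hconv u 0 t (1 - t) ht0 (by linarith) (by ring)
  have hnorm : ENNReal.ofReal (‖t • u‖ ^ 2) ≤ ENNReal.ofReal t * ENNReal.ofReal (‖u‖ ^ 2) := by
    rw [← ENNReal.ofReal_mul ht0, norm_smul, Real.norm_of_nonneg ht0]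
    apply ENNReal.ofReal_le_ofReal
    nlinarith [sq_nonneg ‖u‖, mul_nonneg ht0 (sub_nonneg.2 ht1)]
  calc EOne E (t • u) ≤ ENNReal.ofReal t * ENNReal.ofReal (‖u‖ ^ 2) + ENNReal.ofReal t * E u :=
        add_le_add hnorm hE
    _ = ENNReal.ofReal t * EOne E u := by rw [EOne, mul_add]

lemma EOne_inv_add_smul_inf_le_one (hconv : IsConvexFunctional E) (h0 : E 0 = 0)
    (hinf : ∀ u v : Lp ℝ 2 μ, E (u ⊓ v) + E (u ⊔ v) ≤ E u + E v) {u v : Lp ℝ 2 μ} {a b : ℝ}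
    (ha : 0 < a) (hb : 0 < b) (hu : EOne E (a⁻¹ • u) ≤ 1) (hv : EOne E (b⁻¹ • v) ≤ 1) :
    EOne E ((a + b)⁻¹ • (u ⊓ v)) ≤ 1 := by
  have hab : 0 < a + b := by positivity
  have hu' : (a + b)⁻¹ • u = (a / (a + b)) • (a⁻¹ • u) := by
    rw [smul_smul, div_mul_eq_mul_div, mul_inv_cancel₀ ha.ne', one_div]
  have hv' : (a + b)⁻¹ • v = (b / (a + b)) • (b⁻¹ • v) := by
    rw [smul_smul, div_mul_eq_mul_div, mul_inv_cancel₀ hb.ne', one_div]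
  have hsplit : ENNReal.ofReal (a / (a + b)) + ENNReal.ofReal (b / (a + b)) = 1 := by
    rw [← ENNReal.ofReal_add (by positivity) (by positivity), ← add_div, div_self hab.ne',
      ENNReal.ofReal_one]
  calc EOne E ((a + b)⁻¹ • (u ⊓ v))
      ≤ EOne E ((a + b)⁻¹ • u) + EOne E ((a + b)⁻¹ • v) := by
        rw [Lp.smul_inf_of_nonneg (inv_nonneg.2 hab.le)]
        exact EOne_inf_le hinf _ _
    _ ≤ ENNReal.ofReal (a / (a + b)) * 1 + ENNReal.ofReal (b / (a + b)) * 1 := by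
        rw [hu', hv']
        gcongr
        · exact (EOne_smul_le hconv h0 _ (by positivity)
            ((div_le_one hab).2 (by linarith))).trans (by gcongr)
        · exact (EOne_smul_le hconv h0 _ (by positivity)
            ((div_le_one hab).2 (by linarith))).trans (by gcongr)
    _ = 1 := by rw [mul_one, mul_one, hsplit]

lemma Dnorm_eq_iInf (u : Lp ℝ 2 μ) :
    Dnorm E u = ⨅ l ∈ {l : ℝ | 0 < l ∧ EOne E (l⁻¹ • u) ≤ 1}, ENNReal.ofReal l :=
  sInf_image

lemma Dnorm_le_ofReal {u : Lp ℝ 2 μ} {l : ℝ} (hl : 0 < l) (hu : EOne E (l⁻¹ • u) ≤ 1) :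
    Dnorm E u ≤ ENNReal.ofReal l :=
  sInf_le ⟨l, ⟨hl, hu⟩, rfl⟩

end LuxemburgNorm

theorem Dnorm_inf_le_general
    (E : Lp ℝ 2 m → ℝ≥0∞) (hE : IsDirichletForm E) (hsym : IsSymmetricFunctional E) :
    ∀ u ∈ Dspace E, ∀ v ∈ Dspace E,
      Dnorm E (u ⊓ v) ≤ Dnorm E u + Dnorm E v := by
  obtain ⟨hconv, -, -, hinf, -⟩ := hE
  intro u _ v _
  rw [Dnorm_eq_iInf u, Dnorm_eq_iInf v]
  simp only [ENNReal.iInf_add]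
  simp only [ENNReal.add_iInf]
  refine le_iInf₂ fun a ⟨ha, hau⟩ => le_iInf₂ fun b ⟨hb, hbv⟩ => ?_
  rw [← ENNReal.ofReal_add ha.le hb.le]
  exact Dnorm_le_ofReal (by positivity)
    (EOne_inv_add_smul_inf_le_one hconv hsym.1 hinf ha hb hau hbv)

/-- For a symmetric Dirichlet form, `‖u ∧ v‖_𝔇 ≤ ‖u‖_𝔇 + ‖v‖_𝔇`. -/
theorem Dnorm_inf_le
    (hsupp : ∀ U : Set X, IsOpen U → U.Nonempty → 0 < m U)
    (E : Lp ℝ 2 m → ℝ≥0∞) (hE : IsDirichletForm E) (hsym : IsSymmetricFunctional E) :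
    ∀ u ∈ Dspace E, ∀ v ∈ Dspace E,
      Dnorm E (u ⊓ v) ≤ Dnorm E u + Dnorm E v :=
  Dnorm_inf_le_general E hE hsym

end
end

section
/- Let E be a quasilinear symmetric Dirichlet form on L²(X,m), i.e. in addition dom(E) = {u : E(u) < ∞} is a linear subspace of L²(X,m). Then the lattice operations are jointly continuous on the energy space: if uₙ → u and vₙ → v in the norm ‖·‖_𝔇, then uₙ∧vₙ → u∧v and uₙ∨vₙ → u∨v in ‖·‖_𝔇. -/
open scoped ENNReal
open MeasureTheory

noncomputable section

variable {X : Type*} [TopologicalSpace X] [MeasurableSpace X] [BorelSpace X]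
variable {m : Measure X} [SigmaFinite m]

/-- `E` is quasilinear: its effective domain is a linear subspace of `L²(X,m)`. -/
def IsQuasilinear (E : Lp ℝ 2 m → ℝ≥0∞) : Prop :=
  ∃ S : Submodule ℝ (Lp ℝ 2 m), {u : Lp ℝ 2 m | E u < ⊤} = (S : Set (Lp ℝ 2 m))

/-!
Convergence in `‖·‖_𝔇` is modular convergence: `xₙ → 0` in `L²` and `E (t • xₙ) → 0` for every
`t > 0`. Modular convergence is stable under sums (convexity), negation (symmetry), positive parts
(the lattice inequality against `0`) and truncation `xₙ ⊓ g` by a fixed `g ≥ 0` all of whose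
multiples have finite energy: for `y = t • xₙ` and `G = t • g`, lower semicontinuity gives
`liminf E (y ⊔ G) ≥ E G`, so `E (y ⊓ G) + E (y ⊔ G) ≤ E y + E G` squeezes `E (y ⊓ G)` to `0`.
With `h = u₀ - v₀` and `d = (uₙ - vₙ) - h`, the identity `(h + d)⁺ - h⁺ = (d - d ⊓ h⁻) - d⁻ ⊓ h⁺`
then yields modular convergence of `(uₙ - vₙ)⁺ - (u₀ - v₀)⁺`; quasilinearity is what puts all
multiples of `h` in the effective domain. Finally `u ⊓ v = u - (u - v)⁺` and
`u ⊔ v = v + (u - v)⁺`.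
-/

open Filter Topology

namespace MeasureTheory.Lp

variable {α : Type*} [MeasurableSpace α] {μ : Measure α} {p : ℝ≥0∞}

instance instPosSMulMono : PosSMulMono ℝ (Lp ℝ p μ) where
  smul_le_smul_of_nonneg_left a ha f g hfg := by
    rw [← Lp.coeFn_le] at hfg ⊢
    filter_upwards [hfg, Lp.coeFn_smul a f, Lp.coeFn_smul a g] with x hx hf hg
    simpa only [hf, hg, Pi.smul_apply] using smul_le_smul_of_nonneg_left hx ha

theorem smul_posPart {t : ℝ} (ht : 0 < t) (f : Lp ℝ p μ) : t • f⁺ = (t • f)⁺ := by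
  simpa only [posPart_def, smul_zero, OrderIso.smulRight_apply] using
    (OrderIso.smulRight ht).map_sup f 0

theorem smul_inf {t : ℝ} (ht : 0 < t) (f g : Lp ℝ p μ) : t • (f ⊓ g) = t • f ⊓ t • g :=
  (OrderIso.smulRight ht).map_inf f g

theorem posPart_add_sub_posPart (h d : Lp ℝ p μ) :
    (h + d)⁺ - h⁺ = (d - d ⊓ h⁻) - d⁻ ⊓ h⁺ := by
  simp only [posPart_def, negPart_def]
  apply Lp.ext
  filter_upwards [Lp.coeFn_sub ((h + d) ⊔ 0) (h ⊔ 0), Lp.coeFn_sup (h + d) 0,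
    Lp.coeFn_add h d, Lp.coeFn_sup h 0, Lp.coeFn_sub (d - d ⊓ (-h ⊔ 0)) ((-d ⊔ 0) ⊓ (h ⊔ 0)),
    Lp.coeFn_sub d (d ⊓ (-h ⊔ 0)), Lp.coeFn_inf d (-h ⊔ 0), Lp.coeFn_sup (-h) 0, Lp.coeFn_neg h,
    Lp.coeFn_inf (-d ⊔ 0) (h ⊔ 0), Lp.coeFn_sup (-d) 0, Lp.coeFn_neg d,
    Lp.coeFn_zero ℝ p μ] with x e₁ e₂ e₃ e₄ e₅ e₆ e₇ e₈ e₉ e₁₀ e₁₁ e₁₂ e₁₃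
  simp only [e₁, e₂, e₃, e₄, e₅, e₆, e₇, e₈, e₉, e₁₀, e₁₁, e₁₂, e₁₃, Pi.sub_apply, Pi.add_apply,
    Pi.neg_apply, Pi.sup_apply, Pi.inf_apply, Pi.zero_apply, max_def, min_def]
  split_ifs <;> linarith

end MeasureTheory.Lp

theorem ENNReal.tendsto_nhds_zero_of_eventually_le_ofReal {ι : Type*} {l : Filter ι}
    {f : ι → ℝ≥0∞} (h : ∀ r : ℝ, 0 < r → ∀ᶠ i in l, f i ≤ ENNReal.ofReal r) :
    Tendsto f l (𝓝 0) :=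
  ENNReal.tendsto_nhds_zero.2 fun ε hε => by
    obtain ⟨r, -, hr, hrε⟩ := ENNReal.lt_iff_exists_real_btwn.1 hε
    exact (h r (ENNReal.ofReal_pos.1 hr)).mono fun i hi => hi.trans hrε.le

section Lattice

variable {V : Type*} [Lattice V] {E : V → ℝ≥0∞}

theorem energy_posPart_le [AddGroup V] (hlat : ∀ u v : V, E (u ⊓ v) + E (u ⊔ v) ≤ E u + E v)
    (h0 : E 0 = 0) (x : V) : E x⁺ ≤ E x := by
  rw [posPart_def]
  simpa only [h0, add_zero] using le_add_self.trans (hlat x 0)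

theorem tendsto_energy_inf_of_tendsto [TopologicalSpace V] [ContinuousSup V] {ι : Type*}
    {l : Filter ι} (hlsc : LowerSemicontinuous E)
    (hlat : ∀ u v : V, E (u ⊓ v) + E (u ⊔ v) ≤ E u + E v) {y : ι → V} {y₀ G : V}
    (hy₀ : y₀ ≤ G) (hG : E G ≠ ⊤) (hy : Tendsto y l (𝓝 y₀))
    (hyE : Tendsto (fun i => E (y i)) l (𝓝 0)) : Tendsto (fun i => E (y i ⊓ G)) l (𝓝 0) := by
  have hub : Tendsto (fun i => E (y i) + E G) l (𝓝 (E G)) := by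
    simpa using hyE.add tendsto_const_nhds
  have hsup : Tendsto (fun i => E (y i ⊔ G)) l (𝓝 (E G)) := by
    have hyG : Tendsto (fun i => y i ⊔ G) l (𝓝 G) := by
      simpa only [sup_eq_right.2 hy₀] using hy.sup_nhds (tendsto_const_nhds (x := G))
    refine tendsto_order.2 ⟨fun a ha => hyG.eventually (hlsc G a ha), fun b hb => ?_⟩
    filter_upwards [hub.eventually_lt_const hb] with i hi
    exact (le_add_self.trans (hlat _ _)).trans_lt hi
  have hbound : ∀ᶠ i in l, E (y i ⊓ G) ≤ E (y i) + E G - E (y i ⊔ G) := by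
    filter_upwards [hyE.eventually_lt_const ENNReal.zero_lt_top] with i hi
    have hfin : E (y i ⊔ G) ≠ ⊤ :=
      ne_top_of_le_ne_top (ENNReal.add_ne_top.2 ⟨hi.ne, hG⟩) (le_add_self.trans (hlat _ _))
    exact ENNReal.le_sub_of_add_le_right hfin (hlat _ _)
  have hlim : Tendsto (fun i => E (y i) + E G - E (y i ⊔ G)) l (𝓝 0) := by
    simpa using ENNReal.Tendsto.sub hub hsup (Or.inr hG)
  exact tendsto_of_tendsto_of_tendsto_of_le_of_le' tendsto_const_nhds hlim
    (Eventually.of_forall fun _ => zero_le) hbound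

end Lattice

section ModularConvergence

variable {α : Type*} [MeasurableSpace α] {μ : Measure α} {ι : Type*} {l : Filter ι}

section Modular

variable {p : ℝ≥0∞} [Fact (1 ≤ p)] {E : Lp ℝ p μ → ℝ≥0∞}

def ModularTendstoZero (E : Lp ℝ p μ → ℝ≥0∞) (l : Filter ι) (x : ι → Lp ℝ p μ) : Prop :=
  Tendsto x l (𝓝 0) ∧ ∀ t : ℝ, 0 < t → Tendsto (fun i => E (t • x i)) l (𝓝 0)

namespace ModularTendstoZero

variable {x y : ι → Lp ℝ p μ}

theorem congr (hx : ModularTendstoZero E l x) (h : ∀ i, x i = y i) :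
    ModularTendstoZero E l y :=
  funext h ▸ hx

theorem neg (hneg : ∀ u, E (-u) = E u) (hx : ModularTendstoZero E l x) :
    ModularTendstoZero E l fun i => -x i :=
  ⟨by simpa using hx.1.neg, fun t ht => by simpa only [smul_neg, hneg] using hx.2 t ht⟩

theorem posPart (hlat : ∀ u v, E (u ⊓ v) + E (u ⊔ v) ≤ E u + E v) (h0 : E 0 = 0)
    (hx : ModularTendstoZero E l x) : ModularTendstoZero E l fun i => (x i)⁺ := by
  refine ⟨by simpa only [posPart_def, sup_idem] using
    hx.1.sup_nhds (tendsto_const_nhds (x := (0 : Lp ℝ p μ))), fun t ht => ?_⟩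
  refine tendsto_of_tendsto_of_tendsto_of_le_of_le tendsto_const_nhds (hx.2 t ht)
    (fun _ => zero_le) fun i => ?_
  simpa only [Lp.smul_posPart ht] using energy_posPart_le hlat h0 (t • x i)

theorem inf_const (hlsc : LowerSemicontinuous E)
    (hlat : ∀ u v, E (u ⊓ v) + E (u ⊔ v) ≤ E u + E v) {g : Lp ℝ p μ} (hg₀ : 0 ≤ g)
    (hg : ∀ t : ℝ, 0 < t → E (t • g) ≠ ⊤) (hx : ModularTendstoZero E l x) :
    ModularTendstoZero E l fun i => x i ⊓ g := by
  refine ⟨by simpa only [inf_eq_left.2 hg₀] using hx.1.inf_nhds (tendsto_const_nhds (x := g)),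
    fun t ht => ?_⟩
  simp only [Lp.smul_inf ht]
  exact tendsto_energy_inf_of_tendsto hlsc hlat (smul_nonneg ht.le hg₀) (hg t ht)
    (by simpa using hx.1.const_smul t) (hx.2 t ht)

end ModularTendstoZero

end Modular

section DirichletForm

variable {E : Lp ℝ 2 μ → ℝ≥0∞}

theorem energy_smul_le_of_le_one (hc : IsConvexFunctional E) (h0 : E 0 = 0) {t : ℝ}
    (ht₀ : 0 ≤ t) (ht₁ : t ≤ 1) (x : Lp ℝ 2 μ) : E (t • x) ≤ ENNReal.ofReal t * E x := by
  simpa [h0] using hc x 0 t (1 - t) ht₀ (by linarith) (by ring)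

theorem energy_smul_le_of_eOne_le (hc : IsConvexFunctional E) (h0 : E 0 = 0) {x : Lp ℝ 2 μ}
    {t r : ℝ} (ht : 0 ≤ t) (hr : 0 < r) (htr : t * r ≤ 1) (hx : EOne E (r⁻¹ • x) ≤ 1) :
    E (t • x) ≤ ENNReal.ofReal (t * r) :=
  calc E (t • x) = E ((t * r) • r⁻¹ • x) := by
        rw [smul_smul, mul_assoc, mul_inv_cancel₀ hr.ne', mul_one]
    _ ≤ ENNReal.ofReal (t * r) * E (r⁻¹ • x) :=
        energy_smul_le_of_le_one hc h0 (by positivity) htr _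
    _ ≤ ENNReal.ofReal (t * r) := mul_le_of_le_one_right' (le_add_self.trans hx)

theorem norm_le_of_eOne_le {x : Lp ℝ 2 μ} {r : ℝ} (hr : 0 < r) (hx : EOne E (r⁻¹ • x) ≤ 1) :
    ‖x‖ ≤ r := by
  have hsq : ‖r⁻¹ • x‖ ^ 2 ≤ 1 := ENNReal.ofReal_le_one.1 (le_self_add.trans hx)
  have hnorm : r⁻¹ * ‖x‖ ≤ 1 := by
    simpa [norm_smul, abs_of_pos hr] using (sq_le_one_iff₀ (norm_nonneg _)).1 hsq
  exact (inv_mul_le_iff₀ hr).1 hnorm |>.trans_eq (mul_one r)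

theorem dnorm_le_ofReal {x : Lp ℝ 2 μ} {r : ℝ} (hr : 0 < r) (hx : EOne E (r⁻¹ • x) ≤ 1) :
    Dnorm E x ≤ ENNReal.ofReal r :=
  sInf_le ⟨r, ⟨hr, hx⟩, rfl⟩

theorem exists_lt_of_dnorm_lt {x : Lp ℝ 2 μ} {δ : ℝ} (h : Dnorm E x < ENNReal.ofReal δ) :
    ∃ r, 0 < r ∧ r < δ ∧ EOne E (r⁻¹ • x) ≤ 1 := by
  obtain ⟨_, ⟨r, ⟨hr, hx⟩, rfl⟩, hrδ⟩ := sInf_lt_iff.1 h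
  exact ⟨r, hr, (ENNReal.ofReal_lt_ofReal_iff_of_nonneg hr.le).1 hrδ, hx⟩

theorem IsQuasilinear.energy_smul_sub_ne_top (hql : IsQuasilinear E) {u v : Lp ℝ 2 μ}
    (hu : u ∈ Dspace E) (hv : v ∈ Dspace E) (t : ℝ) : E (t • (u - v)) ≠ ⊤ := by
  obtain ⟨S, hS⟩ := hql
  have hdom (w : Lp ℝ 2 μ) : E w < ⊤ ↔ w ∈ S := Set.ext_iff.1 hS w
  have hmem : ∀ w ∈ Dspace E, w ∈ S := by
    intro w hw
    obtain ⟨_, ⟨r, ⟨hr, hEr⟩, rfl⟩, -⟩ := sInf_lt_iff.1 (show Dnorm E w < ⊤ from hw)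
    have hrw : r⁻¹ • w ∈ S := (hdom _).1 ((le_add_self.trans hEr).trans_lt ENNReal.one_lt_top)
    simpa [smul_smul, hr.ne'] using S.smul_mem r hrw
  exact ((hdom _).2 (S.smul_mem t (S.sub_mem (hmem u hu) (hmem v hv)))).ne

namespace ModularTendstoZero

variable {x y : ι → Lp ℝ 2 μ}

theorem add (hc : IsConvexFunctional E) (hx : ModularTendstoZero E l x)
    (hy : ModularTendstoZero E l y) : ModularTendstoZero E l fun i => x i + y i := by
  refine ⟨by simpa using hx.1.add hy.1, fun t ht => ?_⟩
  have hle : ∀ i, E (t • (x i + y i)) ≤ ENNReal.ofReal (1 / 2) * E ((2 * t) • x i) +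
      ENNReal.ofReal (1 / 2) * E ((2 * t) • y i) := fun i => by
    have hmid : t • (x i + y i) = (1 / 2 : ℝ) • (2 * t) • x i + (1 / 2 : ℝ) • (2 * t) • y i := by
      module
    rw [hmid]
    exact hc _ _ _ _ (by norm_num) (by norm_num) (by norm_num)
  have hlim : Tendsto (fun i => ENNReal.ofReal (1 / 2) * E ((2 * t) • x i) +
      ENNReal.ofReal (1 / 2) * E ((2 * t) • y i)) l (𝓝 0) := by
    simpa only [mul_zero, add_zero] using
      (ENNReal.Tendsto.const_mul (hx.2 (2 * t) (by positivity)) (Or.inr ENNReal.ofReal_ne_top)).add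
        (ENNReal.Tendsto.const_mul (hy.2 (2 * t) (by positivity)) (Or.inr ENNReal.ofReal_ne_top))
  exact tendsto_of_tendsto_of_tendsto_of_le_of_le tendsto_const_nhds hlim (fun _ => zero_le) hle

theorem sub (hc : IsConvexFunctional E) (hneg : ∀ u, E (-u) = E u)
    (hx : ModularTendstoZero E l x) (hy : ModularTendstoZero E l y) :
    ModularTendstoZero E l fun i => x i - y i :=
  (hx.add hc (hy.neg hneg)).congr fun _ => (sub_eq_add_neg _ _).symm

theorem posPart_sub_posPart (hc : IsConvexFunctional E) (h0 : E 0 = 0)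
    (hneg : ∀ u, E (-u) = E u) (hlsc : LowerSemicontinuous E)
    (hlat : ∀ u v, E (u ⊓ v) + E (u ⊔ v) ≤ E u + E v) {x₀ : Lp ℝ 2 μ}
    (hx₀ : ∀ t : ℝ, 0 < t → E (t • x₀) ≠ ⊤) (hx : ModularTendstoZero E l fun i => x i - x₀) :
    ModularTendstoZero E l fun i => (x i)⁺ - x₀⁺ := by
  have hposPart : ∀ w : Lp ℝ 2 μ, (∀ t : ℝ, 0 < t → E (t • w) ≠ ⊤) →
      ∀ t : ℝ, 0 < t → E (t • w⁺) ≠ ⊤ := fun w hw t ht =>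
    ne_top_of_le_ne_top (hw t ht) (by rw [Lp.smul_posPart ht]; exact energy_posPart_le hlat h0 _)
  have hnegPart : ∀ t : ℝ, 0 < t → E (t • x₀⁻) ≠ ⊤ :=
    hposPart (-x₀) fun t ht => by rw [smul_neg, hneg]; exact hx₀ t ht
  have hsubInf := hx.sub hc hneg (hx.inf_const hlsc hlat (negPart_nonneg x₀) hnegPart)
  have hnegInf := (hx.neg hneg).posPart hlat h0 |>.inf_const hlsc hlat (posPart_nonneg x₀)
    (hposPart x₀ hx₀)
  refine (hsubInf.sub hc hneg hnegInf).congr fun i => ?_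
  have key := Lp.posPart_add_sub_posPart x₀ (x i - x₀)
  rw [add_sub_cancel] at key
  exact key.symm

theorem of_tendsto_dnorm (hc : IsConvexFunctional E) (h0 : E 0 = 0)
    (hx : Tendsto (fun i => Dnorm E (x i)) l (𝓝 0)) : ModularTendstoZero E l x := by
  have hadm : ∀ δ : ℝ, 0 < δ → ∀ᶠ i in l, ∃ r, 0 < r ∧ r < δ ∧ EOne E (r⁻¹ • x i) ≤ 1 := fun δ hδ =>
    (hx.eventually_lt_const (ENNReal.ofReal_pos.2 hδ)).mono fun _ => exists_lt_of_dnorm_lt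
  refine ⟨NormedAddGroup.tendsto_nhds_zero.2 fun ε hε => (hadm ε hε).mono ?_,
    fun t ht => ENNReal.tendsto_nhds_zero_of_eventually_le_ofReal fun s hs => ?_⟩
  · rintro i ⟨r, hr, hrε, hx⟩
    exact (norm_le_of_eOne_le hr hx).trans_lt hrε
  · filter_upwards [hadm (min s 1 / t) (by positivity)] with i ⟨r, hr, hrδ, hx⟩
    have htr : t * r ≤ min s 1 := by
      have := (lt_div_iff₀' ht).1 hrδ
      linarith
    exact (energy_smul_le_of_eOne_le hc h0 ht.le hr (htr.trans (min_le_right _ _)) hx).trans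
      (ENNReal.ofReal_le_ofReal (htr.trans (min_le_left _ _)))

theorem tendsto_eOne (hx : ModularTendstoZero E l x) {t : ℝ} (ht : 0 < t) :
    Tendsto (fun i => EOne E (t • x i)) l (𝓝 0) := by
  have hnorm : Tendsto (fun i => ENNReal.ofReal (‖t • x i‖ ^ 2)) l (𝓝 0) := by
    simpa only [smul_zero, norm_zero, zero_pow two_ne_zero, ENNReal.ofReal_zero] using
      ENNReal.tendsto_ofReal ((hx.1.const_smul t).norm.pow 2)
  simpa only [EOne, add_zero] using hnorm.add (hx.2 t ht)

theorem tendsto_dnorm (hx : ModularTendstoZero E l x) :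
    Tendsto (fun i => Dnorm E (x i)) l (𝓝 0) :=
  ENNReal.tendsto_nhds_zero_of_eventually_le_ofReal fun r hr =>
    ((hx.tendsto_eOne (inv_pos.2 hr)).eventually_lt_const one_pos).mono fun _ hi =>
      dnorm_le_ofReal hr (by simpa only [inv_inv] using hi.le)

end ModularTendstoZero

end DirichletForm

end ModularConvergence

theorem lattice_operations_continuous_general
    (E : Lp ℝ 2 m → ℝ≥0∞) (hE : IsDirichletForm E) (hsym : IsSymmetricFunctional E)
    (hql : IsQuasilinear E)
    (u v : ℕ → Lp ℝ 2 m) (u₀ v₀ : Lp ℝ 2 m)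
    (hu₀ : u₀ ∈ Dspace E) (hv₀ : v₀ ∈ Dspace E)
    (hu_conv : Filter.Tendsto (fun n => Dnorm E (u n - u₀)) Filter.atTop (nhds 0))
    (hv_conv : Filter.Tendsto (fun n => Dnorm E (v n - v₀)) Filter.atTop (nhds 0)) :
    Filter.Tendsto (fun n => Dnorm E ((u n ⊓ v n) - (u₀ ⊓ v₀))) Filter.atTop (nhds 0) ∧
    Filter.Tendsto (fun n => Dnorm E ((u n ⊔ v n) - (u₀ ⊔ v₀))) Filter.atTop (nhds 0) := by
  obtain ⟨hc, hlsc, -, hlat, -⟩ := hE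
  obtain ⟨h0, hneg⟩ := hsym
  have hu := ModularTendstoZero.of_tendsto_dnorm hc h0 hu_conv
  have hv := ModularTendstoZero.of_tendsto_dnorm hc h0 hv_conv
  have hpos : ModularTendstoZero E atTop fun n => (u n - v n)⁺ - (u₀ - v₀)⁺ :=
    ModularTendstoZero.posPart_sub_posPart hc h0 hneg hlsc hlat
      (fun t _ => hql.energy_smul_sub_ne_top hu₀ hv₀ t)
      ((hu.sub hc hneg hv).congr fun n => by abel)
  refine ⟨((hu.sub hc hneg hpos).congr fun n => ?_).tendsto_dnorm,
    ((hv.add hc hpos).congr fun n => ?_).tendsto_dnorm⟩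
  · rw [inf_eq_sub_posPart_sub, inf_eq_sub_posPart_sub]
    abel
  · rw [sup_eq_add_posPart_sub, sup_eq_add_posPart_sub]
    abel

/-- For a quasilinear symmetric Dirichlet form, the lattice operations are jointly
continuous on the energy space `𝔇` (with respect to the norm `‖·‖_𝔇`). -/
theorem lattice_operations_continuous
    (hsupp : ∀ U : Set X, IsOpen U → U.Nonempty → 0 < m U)
    (E : Lp ℝ 2 m → ℝ≥0∞) (hE : IsDirichletForm E) (hsym : IsSymmetricFunctional E)
    (hql : IsQuasilinear E)
    (u v : ℕ → Lp ℝ 2 m) (u₀ v₀ : Lp ℝ 2 m)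
    (hu : ∀ n, u n ∈ Dspace E) (hv : ∀ n, v n ∈ Dspace E)
    (hu₀ : u₀ ∈ Dspace E) (hv₀ : v₀ ∈ Dspace E)
    (hu_conv : Filter.Tendsto (fun n => Dnorm E (u n - u₀)) Filter.atTop (nhds 0))
    (hv_conv : Filter.Tendsto (fun n => Dnorm E (v n - v₀)) Filter.atTop (nhds 0)) :
    Filter.Tendsto (fun n => Dnorm E ((u n ⊓ v n) - (u₀ ⊓ v₀))) Filter.atTop (nhds 0) ∧
    Filter.Tendsto (fun n => Dnorm E ((u n ⊔ v n) - (u₀ ⊔ v₀))) Filter.atTop (nhds 0) :=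
  lattice_operations_continuous_general E hE hsym hql u v u₀ v₀ hu₀ hv₀ hu_conv hv_conv

end
end

section
/- Let E be a symmetric Dirichlet form on L²(X,m) and cap the associated norm-capacity. Let (Kₙ)ₙ be a decreasing sequence of closed compact subsets of X with K = ⋂ₙ Kₙ. Then cap(K) = infₙ cap(Kₙ). -/
open scoped ENNReal
open MeasureTheory

noncomputable section

variable {X : Type*} [TopologicalSpace X] [MeasurableSpace X] [BorelSpace X]
variable {m : Measure X} [SigmaFinite m]

/-- The norm-capacity: `cap A = inf {‖u‖_𝔇 | u ≥ 1 a.e. on an open set U ⊇ A}`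
(with `inf ∅ = ∞`). -/
def cap (E : Lp ℝ 2 m → ℝ≥0∞) (A : Set X) : ℝ≥0∞ :=
  sInf (Dnorm E '' {u : Lp ℝ 2 m |
    ∃ U : Set X, IsOpen U ∧ A ⊆ U ∧ ∀ᵐ x ∂m, x ∈ U → 1 ≤ u x})

/-- For a decreasing sequence of closed compact sets `Kₙ ↓ K`,
`cap K = infₙ cap Kₙ`. -/
theorem cap_compact_decreasing
    (hsupp : ∀ U : Set X, IsOpen U → U.Nonempty → 0 < m U)
    (E : Lp ℝ 2 m → ℝ≥0∞) (hE : IsDirichletForm E) (hsym : IsSymmetricFunctional E)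
    (K : ℕ → Set X) (hcomp : ∀ n, IsCompact (K n)) (hclosed : ∀ n, IsClosed (K n))
    (hdec : ∀ n, K (n + 1) ⊆ K n) (K₀ : Set X) (hK : (⋂ n, K n) = K₀) :
    cap E K₀ = ⨅ n, cap E (K n) := by
  have hanti : Antitone K := antitone_nat_of_succ_le hdec
  apply le_antisymm
  · refine le_iInf fun n => ?_
    apply sInf_le_sInf
    apply Set.image_mono
    rintro u ⟨U, hU, hKU, hae⟩
    refine ⟨U, hU, ?_, hae⟩
    rw [← hK]
    exact (Set.iInter_subset K n).trans hKU
  · refine le_sInf ?_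
    rintro c ⟨u, ⟨U, hU, hKU, hae⟩, rfl⟩
    have hsub : (⋂ n, K n) ⊆ U := by rw [hK]; exact hKU
    have hempty : (K 0) ∩ ⋂ n, (K n ∩ Uᶜ) = ∅ := by
      apply Set.eq_empty_iff_forall_notMem.2
      intro x hx
      have hx0 := hx.2
      simp only [Set.mem_iInter, Set.mem_inter_iff] at hx0
      exact (hx0 0).2 (hsub (Set.mem_iInter.2 fun n => (hx0 n).1))
    obtain ⟨t, ht⟩ := (hcomp 0).elim_finite_subfamily_closed _
      (fun n => (hclosed n).inter hU.isClosed_compl) hempty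
    have hn : K (t.sup id) ⊆ U := by
      intro x hx
      by_contra hxU
      have hmem : x ∈ K 0 ∩ ⋂ n ∈ t, (K n ∩ Uᶜ) :=
        ⟨hanti (Nat.zero_le _) hx,
          Set.mem_iInter₂.2 fun n hn => ⟨hanti (Finset.le_sup (f := id) hn) hx, hxU⟩⟩
      rw [ht] at hmem
      exact hmem
    refine (iInf_le _ (t.sup id)).trans ?_
    exact sInf_le ⟨u, ⟨U, hU, hn, hae⟩, rfl⟩

end
end
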